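/- Let T be an inverse semigroup and U a right regular T-set. The following are equivalent: (i) u[u', u] = u and u'[u, u'] = u' imply u = u' for all u, u' ∈ U; (ii) [u, u] = [u', u'] = [u, u'] implies u = u' for all u, u' ∈ U; (iii) u[u, u'] = u'[u', u][u, u'] for all u, u' ∈ U; (iv) ω_{u,u} and ω_{u',u'} commute for all u, u' ∈ U. -/
import Mathlib


/-- An inverse semigroup: a semigroup in which every element has a unique
generalized inverse `star s`. -/
class InverseSemigroup (S : Type*) extends Semigroup S where
  star : S → S
  mul_star_mul : ∀ s : S, s * star s * s = s
  star_mul_star : ∀ s : S, star s * s * star s = star s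
  star_unique : ∀ s t : S, s * t * s = s → t * s * t = t → t = star s

postfix:max "⋆" => InverseSemigroup.star

/-- A right regular `T`-set over an inverse semigroup `T`. -/
structure RightRegularSet (T : Type*) [InverseSemigroup T] (U : Type*) where
  act : U → T → U
  act_act : ∀ (u : U) (t t' : T), act (act u t) t' = act u (t * t')
  pair : U → U → T
  pair_act : ∀ (u u' : U) (t : T), pair u (act u' t) = pair u u' * t
  pair_star : ∀ u u' : U, (pair u u')⋆ = pair u' u
  act_pair_self : ∀ u : U, act u (pair u u) = u

/-- Condition (R-iv): the right regular `T`-set is a right inverse `T`-set. -/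
def RightRegularSet.IsInverse {T : Type*} [InverseSemigroup T] {U : Type*}
    (M : RightRegularSet T U) : Prop :=
  ∀ u u' : U, M.act u (M.pair u' u) = u → M.act u' (M.pair u u') = u' → u = u'

/-- The rank-one map `ω_{v,u} : U → V`, `ω_{v,u}(u') = v [u, u']`. -/
def omega {T : Type*} [InverseSemigroup T] {U V : Type*}
    (MU : RightRegularSet T U) (MV : RightRegularSet T V) (v : V) (u : U) :
    U → V :=
  fun w => MV.act v (MU.pair u w)

namespace InverseSemigroup
variable {S : Type*} [InverseSemigroup S]

theorem star_star (s : S) : s⋆⋆ = s :=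
  (star_unique s⋆ s (star_mul_star s) (mul_star_mul s)).symm

theorem idem_star {e : S} (he : e * e = e) : e⋆ = e :=
  (star_unique e e (by rw [he, he]) (by rw [he, he])).symm

theorem mul_idem {e f : S} (he : e * e = e) (hf : f * f = f) :
    (e * f) * (e * f) = e * f := by
  set a := (e * f)⋆ with ha
  have hmsm : (e * f) * a * (e * f) = e * f := mul_star_mul (e * f)
  have hsms : a * (e * f) * a = a := star_mul_star (e * f)
  have h1 : (e * f) * (f * a * e) * (e * f) = e * f := by
    calc (e * f) * (f * a * e) * (e * f)
        = e * (f * f) * a * (e * e) * f := by simp only [mul_assoc]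
      _ = e * f * a * e * f := by rw [he, hf]
      _ = e * f * a * (e * f) := by simp only [mul_assoc]
      _ = e * f := hmsm
  have h2 : (f * a * e) * (e * f) * (f * a * e) = f * a * e := by
    calc (f * a * e) * (e * f) * (f * a * e)
        = f * a * (e * e) * (f * f) * a * e := by simp only [mul_assoc]
      _ = f * a * e * f * a * e := by rw [he, hf]
      _ = f * (a * (e * f) * a) * e := by simp only [mul_assoc]
      _ = f * a * e := by rw [hsms]
  have hfae : f * a * e = a := star_unique (e * f) (f * a * e) h1 h2
  have haa : a * a = a := by
    calc a * a = (f * a * e) * (f * a * e) := by rw [hfae]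
      _ = f * (a * (e * f) * a) * e := by simp only [mul_assoc]
      _ = f * a * e := by rw [hsms]
      _ = a := hfae
  have : e * f = a⋆ := star_unique a (e * f) hsms hmsm
  rw [this, idem_star haa]
  exact haa

theorem idem_comm {e f : S} (he : e * e = e) (hf : f * f = f) :
    e * f = f * e := by
  have hef := mul_idem he hf
  have hfe := mul_idem hf he
  have h1 : (e * f) * (f * e) * (e * f) = e * f := by
    calc (e * f) * (f * e) * (e * f) = e * (f * f) * (e * e) * f := by simp only [mul_assoc]
      _ = (e * f) * (e * f) := by rw [he, hf]; simp only [mul_assoc]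
      _ = e * f := hef
  have h2 : (f * e) * (e * f) * (f * e) = f * e := by
    calc (f * e) * (e * f) * (f * e) = f * (e * e) * (f * f) * e := by simp only [mul_assoc]
      _ = (f * e) * (f * e) := by rw [he, hf]; simp only [mul_assoc]
      _ = f * e := hfe
  have := star_unique (e * f) (f * e) h1 h2
  rw [this, idem_star hef]

theorem star_mul (s t : S) : (s * t)⋆ = t⋆ * s⋆ := by
  have hss : (s⋆ * s) * (s⋆ * s) = s⋆ * s := by
    calc (s⋆ * s) * (s⋆ * s) = (s⋆ * s * s⋆) * s := by simp only [mul_assoc]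
      _ = s⋆ * s := by rw [star_mul_star]
  have htt : (t * t⋆) * (t * t⋆) = t * t⋆ := by
    calc (t * t⋆) * (t * t⋆) = (t * t⋆ * t) * t⋆ := by simp only [mul_assoc]
      _ = t * t⋆ := by rw [mul_star_mul]
  have hcomm := idem_comm hss htt
  have h1 : (s * t) * (t⋆ * s⋆) * (s * t) = s * t := by
    calc (s * t) * (t⋆ * s⋆) * (s * t)
        = s * ((t * t⋆) * (s⋆ * s)) * t := by simp only [mul_assoc]
      _ = s * ((s⋆ * s) * (t * t⋆)) * t := by rw [hcomm]
      _ = (s * s⋆ * s) * (t * t⋆ * t) := by simp only [mul_assoc]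
      _ = s * t := by rw [mul_star_mul, mul_star_mul]
  have h2 : (t⋆ * s⋆) * (s * t) * (t⋆ * s⋆) = t⋆ * s⋆ := by
    calc (t⋆ * s⋆) * (s * t) * (t⋆ * s⋆)
        = t⋆ * ((s⋆ * s) * (t * t⋆)) * s⋆ := by simp only [mul_assoc]
      _ = t⋆ * ((t * t⋆) * (s⋆ * s)) * s⋆ := by rw [hcomm]
      _ = (t⋆ * t * t⋆) * (s⋆ * s * s⋆) := by simp only [mul_assoc]
      _ = t⋆ * s⋆ := by rw [star_mul_star, star_mul_star]
  exact (star_unique (s * t) (t⋆ * s⋆) h1 h2).symm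

end InverseSemigroup

namespace RightRegularSet
open InverseSemigroup
variable {T : Type*} [InverseSemigroup T] {U : Type*} (M : RightRegularSet T U)

theorem pair_self_idem (u : U) : M.pair u u * M.pair u u = M.pair u u := by
  have h := M.pair_act u u (M.pair u u)
  rw [M.act_pair_self] at h
  exact h.symm

theorem pair_act_left (u w : U) (t : T) :
    M.pair (M.act u t) w = t⋆ * M.pair u w := by
  have h := congrArg (star (S := T)) (M.pair_act w u t)
  rwa [M.pair_star, InverseSemigroup.star_mul, M.pair_star] at h

theorem absorb_left (u u' : U) : M.pair u u * M.pair u u' = M.pair u u' := by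
  conv_rhs => rw [← M.act_pair_self u]
  rw [M.pair_act_left, idem_star (M.pair_self_idem u)]

theorem absorb_right (u u' : U) : M.pair u u' * M.pair u' u' = M.pair u u' := by
  have h := M.pair_act u u' (M.pair u' u')
  rw [M.act_pair_self] at h
  exact h.symm

theorem triple (u u' : U) :
    M.pair u u' * M.pair u' u * M.pair u u' = M.pair u u' := by
  have h := mul_star_mul (M.pair u u')
  rwa [M.pair_star] at h

/-- From the hypotheses of (i), all four pairings coincide. -/
theorem keyE {u u' : U} (h1 : M.act u (M.pair u' u) = u)
    (h2 : M.act u' (M.pair u u') = u') :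
    M.pair u u = M.pair u u' ∧ M.pair u' u' = M.pair u u' ∧
      M.pair u' u = M.pair u u' := by
  have haa : M.pair u u' * M.pair u u' = M.pair u u' := by
    have h := M.pair_act u u' (M.pair u u')
    rw [h2] at h
    exact h.symm
  have hsa : M.pair u' u = M.pair u u' := by
    rw [← M.pair_star u u', idem_star haa]
  have hua : M.act u (M.pair u u') = u := by rwa [hsa] at h1
  have he : M.pair u u = M.pair u u' := by
    have h : M.pair u u = M.pair (M.act u (M.pair u u')) (M.act u (M.pair u u')) := by
      rw [hua]
    rw [M.pair_act_left, M.pair_act, idem_star haa, M.absorb_left, haa] at h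
    exact h
  have hf : M.pair u' u' = M.pair u u' := by
    have h : M.pair u' u' =
        M.pair (M.act u' (M.pair u u')) (M.act u' (M.pair u u')) := by rw [h2]
    rw [M.pair_act_left, M.pair_act, idem_star haa] at h
    -- h : pair u' u' = pair u u' * (pair u' u' * pair u u')
    rw [← hsa, M.absorb_left, hsa, haa] at h
    exact h
  exact ⟨he, hf, hsa⟩

/-- (iii) implies (ii). -/
theorem two_of_three
    (h3 : ∀ u u' : U,
      M.act u (M.pair u u') = M.act (M.act u' (M.pair u' u)) (M.pair u u'))
    (u u' : U) (h1 : M.pair u u = M.pair u' u') (h2 : M.pair u' u' = M.pair u u') :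
    u = u' := by
  have hsym : M.pair u' u = M.pair u u' := by
    calc M.pair u' u = (M.pair u u')⋆ := (M.pair_star u u').symm
      _ = (M.pair u' u')⋆ := by rw [← h2]
      _ = (M.pair u u)⋆ := by rw [← h1]
      _ = M.pair u u := M.pair_star u u
      _ = M.pair u u' := h1.trans h2
  have g : M.pair u u = M.pair u u' := h1.trans h2
  have h := h3 u u'
  rw [M.act_act, hsym, ← g, M.pair_self_idem, M.act_pair_self, h1,
    M.act_pair_self] at h
  exact h
end RightRegularSet

open InverseSemigroup RightRegularSet

theorem stmt12 {T : Type*} [InverseSemigroup T] {U : Type*}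
    (M : RightRegularSet T U) :
    List.TFAE
      [∀ u u' : U, M.act u (M.pair u' u) = u → M.act u' (M.pair u u') = u' → u = u',
       ∀ u u' : U, M.pair u u = M.pair u' u' → M.pair u' u' = M.pair u u' → u = u',
       ∀ u u' : U,
         M.act u (M.pair u u') = M.act (M.act u' (M.pair u' u)) (M.pair u u'),
       ∀ u u' : U, omega M M u u ∘ omega M M u' u' = omega M M u' u' ∘ omega M M u u] := by
  tfae_have 1 → 2 := by
    intro h u u' h1 h2
    refine h u u' ?_ ?_
    · have hx : M.pair u' u = M.pair u u := by
        rw [← M.pair_star u u', ← h2, M.pair_star u' u', ← h1]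
      rw [hx, M.act_pair_self]
    · rw [← h2, M.act_pair_self]
  tfae_have 2 → 1 := by
    intro h u u' h1 h2
    obtain ⟨he, hf, _⟩ := M.keyE h1 h2
    exact h u u' (he.trans hf.symm) hf
  tfae_have 2 → 3 := by
    intro h u u'
    rw [M.act_act]
    have pxx : M.pair (M.act u (M.pair u u')) (M.act u (M.pair u u'))
        = M.pair u' u * M.pair u u' := by
      rw [M.pair_act_left, M.pair_act, M.absorb_left, M.pair_star]
    have pyy : M.pair (M.act u' (M.pair u' u * M.pair u u'))
          (M.act u' (M.pair u' u * M.pair u u'))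
        = M.pair u' u * M.pair u u' := by
      rw [M.pair_act_left, M.pair_act, InverseSemigroup.star_mul, M.pair_star,
        M.pair_star, ← mul_assoc (M.pair u' u') (M.pair u' u) (M.pair u u'),
        M.absorb_left, mul_assoc, ← mul_assoc (M.pair u u'), M.triple]
    have pxy : M.pair (M.act u (M.pair u u'))
          (M.act u' (M.pair u' u * M.pair u u'))
        = M.pair u' u * M.pair u u' := by
      rw [M.pair_act_left, M.pair_act, M.pair_star,
        ← mul_assoc (M.pair u u'), M.triple]
    exact h _ _ (pxx.trans pyy.symm) (pyy.trans pxy.symm)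
  tfae_have 3 → 4 := by
    intro h u u'
    funext w
    simp only [Function.comp_apply, omega]
    rw [M.pair_act, M.pair_act]
    -- key identities derived from (iii)
    have k1 : M.pair u' u * M.pair u w
        = M.pair u' u * M.pair u u' * M.pair u' w := by
      have h0 := h u u'
      rw [M.act_act] at h0
      have hw := congrArg (fun z => M.pair w z) h0
      simp only [M.pair_act] at hw
      have hs := congrArg (star (S := T)) hw
      rw [InverseSemigroup.star_mul, InverseSemigroup.star_mul,
        InverseSemigroup.star_mul, M.pair_star, M.pair_star, M.pair_star,
        M.pair_star] at hs
      rw [hs, mul_assoc]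
    have k2 : M.pair u u' * M.pair u' w
        = M.pair u u' * M.pair u' u * M.pair u w := by
      have h0 := h u' u
      rw [M.act_act] at h0
      have hw := congrArg (fun z => M.pair w z) h0
      simp only [M.pair_act] at hw
      have hs := congrArg (star (S := T)) hw
      rw [InverseSemigroup.star_mul, InverseSemigroup.star_mul,
        InverseSemigroup.star_mul, M.pair_star, M.pair_star, M.pair_star,
        M.pair_star] at hs
      rw [hs, mul_assoc]
    set x := M.act u (M.pair u u' * M.pair u' w) with hxdef
    set y := M.act u' (M.pair u' u * M.pair u w) with hydef
    have pxx : M.pair x x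
        = (M.pair w u' * M.pair u' u) * (M.pair u u' * M.pair u' w) := by
      rw [hxdef, M.pair_act_left, M.pair_act, InverseSemigroup.star_mul,
        M.pair_star, M.pair_star, ← mul_assoc (M.pair u u) (M.pair u u'),
        M.absorb_left]
    have pxy : M.pair x y = (M.pair w u' * M.pair u' u)
        * (M.pair u u' * M.pair u' w) := by
      rw [hxdef, hydef, M.pair_act_left, M.pair_act, InverseSemigroup.star_mul,
        M.pair_star, M.pair_star, ← mul_assoc (M.pair u u') (M.pair u' u),
        ← k2]
    have pyy : M.pair y y
        = (M.pair w u * M.pair u u') * (M.pair u' u * M.pair u w) := by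
      rw [hydef, M.pair_act_left, M.pair_act, InverseSemigroup.star_mul,
        M.pair_star, M.pair_star, ← mul_assoc (M.pair u' u') (M.pair u' u),
        M.absorb_left]
    have pyx : M.pair y x
        = (M.pair w u * M.pair u u') * (M.pair u' u * M.pair u w) := by
      rw [hydef, hxdef, M.pair_act_left, M.pair_act, InverseSemigroup.star_mul,
        M.pair_star, M.pair_star, ← mul_assoc (M.pair u' u) (M.pair u u'),
        ← k1]
    have hE : M.pair x y = M.pair x x := pxy.trans pxx.symm
    have hF : M.pair y x = M.pair y y := pyx.trans pyy.symm
    have hFE : M.pair y y = M.pair x x := by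
      rw [← hF, ← M.pair_star x y, hE, M.pair_star]
    exact M.two_of_three h x y hFE.symm (hFE.trans hE.symm)
  tfae_have 4 → 1 := by
    intro h u u' h1 h2
    obtain ⟨he, hf, hsa⟩ := M.keyE h1 h2
    have haa : M.pair u u' * M.pair u u' = M.pair u u' := by
      have h' := M.pair_self_idem u
      rwa [he] at h'
    have hc := congrFun (h u u') u
    simp only [Function.comp_apply, omega] at hc
    rw [M.act_pair_self, M.pair_act, hsa, haa] at hc
    calc u = M.act u (M.pair u' u) := h1.symm
      _ = M.act u (M.pair u u') := by rw [hsa]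
      _ = M.act u' (M.pair u u') := hc
      _ = u' := h2
  tfae_finish
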